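/- Let G be a reaction network on species X and let ℰ ⊆ X be a set of independently conserved species, each closed in G. Then for every choice of reaction rates κ on the open network G_{ℰ⇌0}, the mass action system (G_{ℰ⇌0}, κ) has absolute concentration robustness in every species of ℰ: every positive steady state x of (G_{ℰ⇌0}, κ) satisfies x_E = κ_{0→E}/κ_{E→0} for each E ∈ ℰ. -/
import Mathlib


/-- A reaction `y → y'` is a pair of complexes, each a vector of
nonnegative integer coefficients indexed by the species: the source and the target. -/
abbrev Reaction (S : Type) : Type := (S → ℕ) × (S → ℕ)

section General

variable {S : Type} [Fintype S] [DecidableEq S]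

/-- The complex consisting of a single copy of species `s`. -/
def unitC (s : S) : S → ℕ := fun t => if t = s then 1 else 0

/-- The complex `a + b`. -/
def pairC (a b : S) : S → ℕ := fun t => (if t = a then 1 else 0) + (if t = b then 1 else 0)

/-- The mass action right-hand side `f_κ` of a network `R` with rates `κ`. -/
def massAction (R : Finset (Reaction S)) (κ : Reaction S → ℝ) (x : S → ℝ) : S → ℝ :=
  fun s => ∑ r ∈ R, κ r * (∏ t, x t ^ r.1 t) * ((r.2 s : ℝ) - (r.1 s : ℝ))

/-- The stoichiometric subspace of a network: the span of its reaction vectors. -/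
def stoichSubspace (R : Finset (Reaction S)) : Submodule ℝ (S → ℝ) :=
  Submodule.span ℝ ((fun r : Reaction S => fun s => ((r.2 s : ℝ) - (r.1 s : ℝ))) '' ↑R)

/-- A positive steady state of the mass action system `(R, κ)`. -/
def isPosSteadyState (R : Finset (Reaction S)) (κ : Reaction S → ℝ) (x : S → ℝ) : Prop :=
  (∀ s, 0 < x s) ∧ massAction R κ x = 0

/-- A steady state is nondegenerate if the kernel of the Jacobian of the mass action
right-hand side intersects the stoichiometric subspace trivially. -/
def nondegenerate (R : Finset (Reaction S)) (κ : Reaction S → ℝ) (x : S → ℝ) : Prop :=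
  ∀ v ∈ stoichSubspace R, fderiv ℝ (massAction R κ) x v = 0 → v = 0

/-- A network admits nondegenerate multistationarity if for some positive rates there are
two distinct nondegenerate positive steady states in the same stoichiometric
compatibility class. -/
def admitsNondegMultistationarity (R : Finset (Reaction S)) : Prop :=
  ∃ κ : Reaction S → ℝ, (∀ r ∈ R, 0 < κ r) ∧
    ∃ x y : S → ℝ, x ≠ y ∧
      isPosSteadyState R κ x ∧ isPosSteadyState R κ y ∧
      nondegenerate R κ x ∧ nondegenerate R κ y ∧
      y - x ∈ stoichSubspace R

/-- The inflow reaction `0 → s`. -/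
def inflow (s : S) : Reaction S := (fun _ => 0, unitC s)

/-- The outflow reaction `s → 0`. -/
def outflow (s : S) : Reaction S := (unitC s, fun _ => 0)

/-- The open network on `E`: add inflow and outflow reactions for every species of `E`. -/
def openOn (R : Finset (Reaction S)) (E : Finset S) : Finset (Reaction S) :=
  R ∪ E.image inflow ∪ E.image outflow

/-- A conservation law: a vector orthogonal to the stoichiometric subspace. -/
def conservationLaw (R : Finset (Reaction S)) (w : S → ℝ) : Prop :=
  ∀ v ∈ stoichSubspace R, ∑ s, w s * v s = 0

/-- A set `E` of species is independently conserved in `R` if there are conservation laws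
`L e` for `e ∈ E` such that `L e` has a nonzero coordinate at `e` and zero coordinate at
`e` for every other `L e'`, `e' ∈ E`. -/
def IndepConserved (R : Finset (Reaction S)) (E : Finset S) : Prop :=
  ∃ L : S → (S → ℝ), ∀ e ∈ E,
    conservationLaw R (L e) ∧ L e e ≠ 0 ∧ ∀ e' ∈ E, e' ≠ e → L e' e = 0

/-- A species is closed in `R` if neither its inflow nor its outflow is a reaction of `R`. -/
def ClosedIn (R : Finset (Reaction S)) (s : S) : Prop :=
  inflow s ∉ R ∧ outflow s ∉ R

/-- Projection of a complex onto the coordinates outside `E`. -/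
def projC (E : Finset S) (y : S → ℕ) : {s : S // s ∉ E} → ℕ := fun s => y s.val

/-- Projection of a reaction onto the coordinates outside `E`. -/
def projR (E : Finset S) (r : Reaction S) : Reaction {s : S // s ∉ E} :=
  (projC E r.1, projC E r.2)

/-- The projected network `G₋E` on the species outside `E`: project all reactions and
remove self-loops. -/
def projNet (R : Finset (Reaction S)) (E : Finset S) : Finset (Reaction {s : S // s ∉ E}) :=
  (R.image (projR E)).filter fun r => r.1 ≠ r.2

/-- Inclusion of a reaction on the species of `E` into a reaction on all of `S`. -/
def inclR (E : Finset S) (r : Reaction {s : S // s ∈ E}) : Reaction S :=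
  (fun s => if h : s ∈ E then r.1 ⟨s, h⟩ else 0,
   fun s => if h : s ∈ E then r.2 ⟨s, h⟩ else 0)

/-- `R` has at most `l` positive steady states in each stoichiometric compatibility class,
for every choice of positive reaction rates: there is no injective family of `l + 1`
positive steady states lying pairwise in the same compatibility class. -/
def atMostPosSS (R : Finset (Reaction S)) (l : ℕ) : Prop :=
  ∀ κ : Reaction S → ℝ, (∀ r ∈ R, 0 < κ r) →
    ∀ f : Fin (l + 1) → (S → ℝ),
      (∀ j, isPosSteadyState R κ (f j)) →
      (∀ j k, f k - f j ∈ stoichSubspace R) →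
      ¬ Function.Injective f

/-- Monostationarity: at most one positive steady state in each stoichiometric
compatibility class, for every choice of positive rates. -/
def monostationary (R : Finset (Reaction S)) : Prop :=
  atMostPosSS R 1

end General

/-- Species of the sequential `n`-site phosphorylation–dephosphorylation cycle:
the enzymes `E`, `F`, the substrates `S i` for `i = 0, …, n`, and the intermediates
`ES i` for `i = 0, …, n-1` and `FS i` (denoting `FS_{i+1}`) for `i = 0, …, n-1`. -/
inductive PS (n : ℕ) : Type
  | E : PS n
  | F : PS n
  | S : Fin (n + 1) → PS n
  | ES : Fin n → PS n
  | FS : Fin n → PS n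
deriving DecidableEq, Fintype

/-- The sequential `n`-site phosphorylation–dephosphorylation cycle `𝒫ⁿ`, with the `6n`
reactions `S_i + E ⇌ ES_i`, `ES_i → S_{i+1} + E` for `i = 0, …, n-1` and
`S_i + F ⇌ FS_i`, `FS_i → S_{i-1} + F` for `i = 1, …, n`. -/
def Pcycle (n : ℕ) : Finset (Reaction (PS n)) :=
  (Finset.univ.image fun i : Fin n => (pairC (PS.S i.castSucc) PS.E, unitC (PS.ES i))) ∪
  (Finset.univ.image fun i : Fin n => (unitC (PS.ES i), pairC (PS.S i.castSucc) PS.E)) ∪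
  (Finset.univ.image fun i : Fin n => (unitC (PS.ES i), pairC (PS.S i.succ) PS.E)) ∪
  (Finset.univ.image fun i : Fin n => (pairC (PS.S i.succ) PS.F, unitC (PS.FS i))) ∪
  (Finset.univ.image fun i : Fin n => (unitC (PS.FS i), pairC (PS.S i.succ) PS.F)) ∪
  (Finset.univ.image fun i : Fin n => (unitC (PS.FS i), pairC (PS.S i.castSucc) PS.F))


section AuxACR
variable {S : Type} [Fintype S] [DecidableEq S]

lemma inflow_injective : Function.Injective (inflow (S := S)) := by
  intro a b h
  have := congrFun (congrArg Prod.snd h) a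
  by_contra hne
  simp [inflow, unitC, hne] at this

lemma outflow_injective : Function.Injective (outflow (S := S)) := by
  intro a b h
  have := congrFun (congrArg Prod.fst h) a
  by_contra hne
  simp [outflow, unitC, hne] at this

lemma prod_pow_unitC (x : S → ℝ) (a : S) : (∏ t, x t ^ unitC a t) = x a := by
  have : (fun t => x t ^ unitC a t) = (fun t => if t = a then x t else 1) := by
    funext t; by_cases h : t = a <;> simp [unitC, h]
  rw [this]
  simp

lemma sum_mul_unitC (w : S → ℝ) (a : S) : (∑ s, w s * (unitC a s : ℝ)) = w a := by
  have : (fun s => w s * (unitC a s : ℝ)) = (fun s => if s = a then w s else 0) := by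
    funext s; by_cases h : s = a <;> simp [unitC, h]
  rw [this]
  simp

end AuxACR

/-- **ACR emergence under opening.** Let `E` be a set of independently
conserved species, each closed in `G`. Then for every choice of positive rates `κ` on
`G_{E⇌0}`, every positive steady state `x` of `(G_{E⇌0}, κ)` satisfies
`x_e = κ_{0→e} / κ_{e→0}` for each `e ∈ E`; in particular the system has absolute
concentration robustness in every species of `E`. -/
theorem acr_under_opening {S : Type} [Fintype S] [DecidableEq S]
    (R : Finset (Reaction S)) (E : Finset S)
    (hIC : IndepConserved R E) (hCl : ∀ e ∈ E, ClosedIn R e)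
    (κ : Reaction S → ℝ) (hκ : ∀ r ∈ openOn R E, 0 < κ r)
    (x : S → ℝ) (hx : isPosSteadyState (openOn R E) κ x) :
    ∀ e ∈ E, x e = κ (inflow e) / κ (outflow e) := by
  intro e he
  obtain ⟨L, hL⟩ := hIC
  obtain ⟨hlaw, hLe, -⟩ := hL e he
  have hzero : ∀ e' ∈ E, e' ≠ e → L e e' = 0 := fun e' he' hne =>
    (hL e' he').2.2 e he hne.symm
  -- disjointness
  have hd1 : Disjoint R (E.image inflow) := by
    rw [Finset.disjoint_right]
    intro r hr
    obtain ⟨a, ha, rfl⟩ := Finset.mem_image.mp hr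
    exact (hCl a ha).1
  have hd2 : Disjoint (R ∪ E.image inflow) (E.image outflow) := by
    rw [Finset.disjoint_right]
    intro r hr
    obtain ⟨a, ha, rfl⟩ := Finset.mem_image.mp hr
    intro hmem
    rcases Finset.mem_union.mp hmem with h | h
    · exact (hCl a ha).2 h
    · obtain ⟨b, hb, hab⟩ := Finset.mem_image.mp h
      have := congrFun (congrArg Prod.fst hab) a
      simp [inflow, outflow, unitC] at this
  -- the key computation
  have key : (∑ s, L e s * massAction (openOn R E) κ x s) = 0 := by
    rw [hx.2]; simp
  have expand : (∑ s, L e s * massAction (openOn R E) κ x s)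
      = L e e * (κ (inflow e) - κ (outflow e) * x e) := by
    have step1 : (∑ s, L e s * massAction (openOn R E) κ x s)
        = ∑ r ∈ openOn R E, κ r * (∏ t, x t ^ r.1 t) *
            (∑ s, L e s * ((r.2 s : ℝ) - (r.1 s : ℝ))) := by
      simp only [massAction, Finset.mul_sum]
      rw [Finset.sum_comm]
      apply Finset.sum_congr rfl
      intro r _
      apply Finset.sum_congr rfl
      intro s _
      ring
    rw [step1]
    unfold openOn
    rw [Finset.sum_union hd2, Finset.sum_union hd1]
    have hR : (∑ r ∈ R, κ r * (∏ t, x t ^ r.1 t) *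
        (∑ s, L e s * ((r.2 s : ℝ) - (r.1 s : ℝ)))) = 0 := by
      apply Finset.sum_eq_zero
      intro r hr
      have hv : (fun s => ((r.2 s : ℝ) - (r.1 s : ℝ))) ∈ stoichSubspace R :=
        Submodule.subset_span ⟨r, hr, rfl⟩
      have := hlaw _ hv
      simp only [this, mul_zero]
    have hin : (∑ r ∈ E.image inflow, κ r * (∏ t, x t ^ r.1 t) *
        (∑ s, L e s * ((r.2 s : ℝ) - (r.1 s : ℝ)))) = κ (inflow e) * L e e := by
      rw [Finset.sum_image (fun a _ b _ h => inflow_injective h)]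
      rw [Finset.sum_eq_single e]
      · simp [inflow, sum_mul_unitC]
      · intro b hb hbe
        have : (∑ s, L e s * (((inflow b).2 s : ℝ) - ((inflow b).1 s : ℝ))) = 0 := by
          simp [inflow, sum_mul_unitC, hzero b hb hbe]
        simp [this]
      · intro h; exact absurd he h
    have hout : (∑ r ∈ E.image outflow, κ r * (∏ t, x t ^ r.1 t) *
        (∑ s, L e s * ((r.2 s : ℝ) - (r.1 s : ℝ)))) = -(κ (outflow e) * x e * L e e) := by
      rw [Finset.sum_image (fun a _ b _ h => outflow_injective h)]
      rw [Finset.sum_eq_single e]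
      · have h1 : (∑ s, L e s * (((outflow e).2 s : ℝ) - ((outflow e).1 s : ℝ)))
            = -(L e e) := by
          simp only [outflow]
          simp [sum_mul_unitC]
        rw [h1]
        have h2 : (∏ t, x t ^ (outflow e).1 t) = x e := prod_pow_unitC x e
        rw [h2]; ring
      · intro b hb hbe
        have : (∑ s, L e s * (((outflow b).2 s : ℝ) - ((outflow b).1 s : ℝ))) = 0 := by
          simp [outflow, sum_mul_unitC, hzero b hb hbe]
        simp [this]
      · intro h; exact absurd he h
    rw [hR, hin, hout]
    ring
  rw [expand] at key
  have hfac : κ (inflow e) - κ (outflow e) * x e = 0 := by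
    rcases mul_eq_zero.mp key with h | h
    · exact absurd h hLe
    · exact h
  have hout_pos : 0 < κ (outflow e) := by
    apply hκ
    exact Finset.mem_union_right _ (Finset.mem_image.mpr ⟨e, he, rfl⟩)
  field_simp
  linarith [hfac]
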